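/- Let S be a finite nonempty set and let s be an infinite sequence over S. Then for every k ≥ 1, s contains a contiguous finite subsequence that is a k-cycle, i.e., a contiguous finite subsequence whose first and last entries coincide, in which at least one element occurs exactly k+1 times, and in which every element occurs at most k+1 times. -/

import Mathlib

set_option autoImplicit false

/-! ## Syntax: arguments, atoms, rules -/

/-- Rule arguments: constants or variables (variables are natural numbers). -/
inductive RArg (C : Type) : Type
  | const : C → RArg C
  | var : ℕ → RArg C

/-- Atoms: a predicate applied to a list of arguments. -/
structure Atom (P τ : Type) : Type where
  pred : P
  args : List τ

/-- An existential rule: finite sets of body and head atoms whose arguments are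
constants and variables. -/
structure Rule (P C : Type) : Type where
  body : Finset (Atom P (RArg C))
  head : Finset (Atom P (RArg C))

instance {P C : Type} : Inhabited (Rule P C) := ⟨⟨∅, ∅⟩⟩

def RArg.toVar? {C : Type} : RArg C → Option ℕ
  | RArg.var v => some v
  | RArg.const _ => none

/-- The list of variables occurring in (the argument list of) an atom. -/
def Atom.varsL {P C : Type} (a : Atom P (RArg C)) : List ℕ :=
  a.args.filterMap RArg.toVar?

/-- The (universal) variables of a rule: the variables of its body. -/
def Rule.bodyVars {P C : Type} (r : Rule P C) : Finset ℕ :=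
  r.body.biUnion fun a => a.varsL.toFinset

def Rule.headVars {P C : Type} (r : Rule P C) : Finset ℕ :=
  r.head.biUnion fun a => a.varsL.toFinset

/-- Frontier variables: body variables occurring in the head. -/
def Rule.frontier {P C : Type} (r : Rule P C) : Finset ℕ :=
  r.bodyVars ∩ r.headVars

/-- Existential variables: head variables not occurring in the body. -/
def Rule.exVars {P C : Type} (r : Rule P C) : Finset ℕ :=
  r.headVars \ r.bodyVars

/-- A canonical listing of the frontier variables of a rule. -/
def Rule.frontierList {P C : Type} (r : Rule P C) : List ℕ :=
  r.frontier.sort (· ≤ ·)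

/-- A rule is simple if no variable occurs more than once in its body. -/
def Rule.IsSimple {P C : Type} (r : Rule P C) : Prop :=
  (∀ a ∈ r.body, a.varsL.Nodup) ∧
    ∀ a ∈ r.body, ∀ b ∈ r.body, a ≠ b → ∀ v ∈ a.varsL, v ∉ b.varsL

/-! ## Ground terms, instances, databases -/

/-- Ground terms over constants `C` and function symbols `F`. -/
inductive GTerm (C F : Type) : Type
  | const : C → GTerm C F
  | func : F → List (GTerm C F) → GTerm C F

/-- The height (nesting depth) of a ground term; constants have height 0. -/
def GTerm.height {C F : Type} : GTerm C F → ℕ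
  | .const _ => 0
  | .func _ ts => 1 + (ts.attach.map (fun t => GTerm.height t.1)).foldr max 0
decreasing_by
  simp_wf
  have := List.sizeOf_lt_of_mem t.2
  omega

/-- Ground constants: the constants `C` occurring in rules together with the
fresh indexed constants `⟨v, i⟩` (and the fresh constant `∗ = inr (0,0)`). -/
abbrev GConst (C : Type) : Type := C ⊕ (ℕ × ℕ)

/-- Skolem function symbols: one fresh symbol `f_{r,z}` for each rule `r` and
existential variable `z`. -/
abbrev SkFun (P C : Type) : Type := Rule P C × ℕ

/-- Ground terms built from constants and skolem function symbols. -/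
abbrev GT (P C : Type) : Type := GTerm (GConst C) (SkFun P C)

abbrev GAtom (P C : Type) : Type := Atom P (GT P C)

/-- An instance is a set of atoms over ground terms. -/
abbrev Inst (P C : Type) : Type := Set (GAtom P C)

/-- An assignment of ground terms to variables. -/
abbrev Assign (P C : Type) : Type := ℕ → GT P C

/-- A database: a finite instance all of whose terms are constants. -/
def IsDatabase {P C : Type} (I : Inst P C) : Prop :=
  I.Finite ∧ ∀ a ∈ I, ∀ t ∈ a.args, ∃ c : GConst C, t = GTerm.const c

/-! ## Applying assignments and substitutions -/

def RArg.interp {P C : Type} (h : Assign P C) : RArg C → GT P C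
  | RArg.const c => GTerm.const (Sum.inl c)
  | RArg.var v => h v

def Atom.interp {P C : Type} (h : Assign P C) (a : Atom P (RArg C)) : GAtom P C :=
  ⟨a.pred, a.args.map (RArg.interp h)⟩

/-- The image `h(body(r))` of the body of a rule under an assignment. -/
def Rule.bodyI {P C : Type} (r : Rule P C) (h : Assign P C) : Inst P C :=
  (Atom.interp h) '' ↑r.body

/-- The image `h(head(r))` of the head of a rule under an assignment. -/
def Rule.headI {P C : Type} (r : Rule P C) (h : Assign P C) : Inst P C :=
  (Atom.interp h) '' ↑r.head

/-- The skolem extension of an assignment: each existential variable `z` of `r`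
is sent to the skolem term `f_{r,z}(x)`, where `x` lists the frontier variables. -/
def Rule.skolemExt {P C : Type} (r : Rule P C) (h : Assign P C) : Assign P C :=
  fun v => if v ∈ r.exVars then GTerm.func (r, v) (r.frontierList.map h) else h v

/-- `h(sk(head(r)))`: the atoms added when the trigger `(r,h)` is applied. -/
def Rule.skApply {P C : Type} (r : Rule P C) (h : Assign P C) : Inst P C :=
  r.headI (r.skolemExt h)

/-- A ground substitution: fixes all constants (skolem terms are nulls and may
be mapped anywhere). -/
def IsGSubst {P C : Type} (f : GT P C → GT P C) : Prop :=
  ∀ c : GConst C, f (GTerm.const c) = GTerm.const c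

def Atom.mapArgs {P C : Type} (f : GT P C → GT P C) (a : GAtom P C) : GAtom P C :=
  ⟨a.pred, a.args.map f⟩

/-! ## Triggers, the restricted chase, chained sequences, activeness -/

/-- `(r,h)` is a trigger on `I`: `h` is a homomorphism from `body(r)` to `I`. -/
def Trigger {P C : Type} (r : Rule P C) (h : Assign P C) (I : Inst P C) : Prop :=
  r.bodyI h ⊆ I

/-- An active trigger: no extension of `h` on the existential variables
satisfies the head in `I`. -/
def ActiveTrigger {P C : Type} (r : Rule P C) (h : Assign P C) (I : Inst P C) : Prop :=
  Trigger r h I ∧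
    ∀ h' : Assign P C, (∀ v ∈ r.bodyVars, h' v = h v) → ¬ (r.headI h' ⊆ I)

/-- `π` leads to a restricted chase sequence `Is 0, …, Is π.length` from `Is 0 = I0`,
generated by the active triggers `(π.get i, hs i)`. -/
def RCSeq {P C : Type} (π : List (Rule P C)) (I0 : Inst P C)
    (Is : ℕ → Inst P C) (hs : ℕ → Assign P C) : Prop :=
  Is 0 = I0 ∧ ∀ i < π.length,
    ActiveTrigger (π.getD i default) (hs i) (Is i) ∧
      Is (i + 1) = Is i ∪ (π.getD i default).skApply (hs i)

/-- `π` leads to a skolem chase sequence (triggers need not be active). -/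
def SkSeq {P C : Type} (π : List (Rule P C)) (I0 : Inst P C)
    (Is : ℕ → Inst P C) (hs : ℕ → Assign P C) : Prop :=
  Is 0 = I0 ∧ ∀ i < π.length,
    Trigger (π.getD i default) (hs i) (Is i) ∧
      Is (i + 1) = Is i ∪ (π.getD i default).skApply (hs i)

/-- Rule `r'` depends on rule `r` w.r.t. instance `I`. -/
def RuleDependsOn {P C : Type} (r' r : Rule P C) (I : Inst P C) : Prop :=
  ∃ h g : Assign P C,
    r.bodyI h ⊆ I ∧ r'.bodyI g ⊆ I ∪ r.skApply h ∧ ¬ (r'.bodyI g ⊆ I)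

/-- The chained property of a restricted chase sequence for `π`: some projection of
`π` preserving the end points is linked by the depends-on relation. -/
def Chained {P C : Type} (π : List (Rule P C)) (I0 : Inst P C)
    (Is : ℕ → Inst P C) (hs : ℕ → Assign P C) : Prop :=
  ∃ (m : ℕ) (j : ℕ → ℕ),
    1 ≤ m ∧
    (∀ i, i + 1 < m → j i < j (i + 1)) ∧
    j 0 = 0 ∧
    j (m - 1) + 1 = π.length ∧
    (∀ i < m, j i < π.length) ∧
    ∀ i, i + 1 < m →
      RuleDependsOn (π.getD (j (i + 1)) default) (π.getD (j i) default)
        (if i = 0 then I0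
         else Is (j i + 1) \ (π.getD (j i) default).skApply (hs (j i)))

/-- A path `π` is active w.r.t. `I0` if there is a chained restricted chase
sequence for `π` starting from `I0`. -/
def ActivePath {P C : Type} (π : List (Rule P C)) (I0 : Inst P C) : Prop :=
  ∃ (Is : ℕ → Inst P C) (hs : ℕ → Assign P C), RCSeq π I0 Is hs ∧ Chained π I0 Is hs

/-! ## Restricted critical databases and renaming -/

/-- The assignment `e_i` sending variable `v` to the fresh indexed constant `⟨v,i⟩`. -/
def idxAssign {P C : Type} (i : ℕ) : Assign P C :=
  fun v => GTerm.const (Sum.inr (v, i))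

/-- The restricted critical database `I^π` of a path `π`. -/
def criticalDB {P C : Type} (π : List (Rule P C)) : Inst P C :=
  ⋃ i ∈ Finset.range π.length, (π.getD i default).bodyI (idxAssign i)

/-- A renaming function: each indexed constant is mapped to itself or to an
indexed constant with strictly smaller index. -/
def IsRenaming (rn : ℕ × ℕ → ℕ × ℕ) : Prop :=
  ∀ p : ℕ × ℕ, rn p = p ∨ (rn p).2 < p.2

def renameGT {P C : Type} (rn : ℕ × ℕ → ℕ × ℕ) : GT P C → GT P C
  | GTerm.const (Sum.inr p) => GTerm.const (Sum.inr (rn p))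
  | t => t

def renameInst {P C : Type} (rn : ℕ × ℕ → ℕ × ℕ) (I : Inst P C) : Inst P C :=
  (fun a => Atom.mapArgs (renameGT rn) a) '' I

/-! ## Cycles, cycle functions, k-safe -/

/-- The number of occurrences of `x` in the list `σ`. -/
noncomputable def occCount {α : Type} (σ : List α) (x : α) : ℕ :=
  {i : Fin σ.length | σ.get i = x}.ncard

/-- A `k`-cycle: a nonempty sequence whose first and last entries coincide, in
which some element occurs exactly `k+1` times and every element occurs at most
`k+1` times. -/
def IsKCycle {α : Type} (k : ℕ) (σ : List α) : Prop :=
  σ ≠ [] ∧ σ.head? = σ.getLast? ∧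
    (∃ x ∈ σ, occCount σ x = k + 1) ∧ ∀ x ∈ σ, occCount σ x ≤ k + 1

/-- `R` belongs to `k`-safe(Φ): every `k`-cycle based on `R` mapped to `F`
(i.e. not satisfying `Φ`) is safe, i.e. active w.r.t. no database. -/
def kSafe {P C : Type} (R : Set (Rule P C)) (k : ℕ) (Φ : List (Rule P C) → Prop) : Prop :=
  ∀ σ : List (Rule P C), (∀ r ∈ σ, r ∈ R) → IsKCycle k σ → ¬ Φ σ →
    ∀ I0 : Inst P C, IsDatabase I0 → ¬ ActivePath σ I0

/-- The cycle function derived from a class `Δ` of rule sets: a cycle is mapped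
to `T` iff its set of distinct rules belongs to `Δ`. -/
def PhiDelta {P C : Type} (Δ : Set (Set (Rule P C))) : List (Rule P C) → Prop :=
  fun σ => {r | r ∈ σ} ∈ Δ

/-! ## The skolem chase and all-instance termination -/

def skStep {P C : Type} (R : Set (Rule P C)) (I : Inst P C) : Inst P C :=
  I ∪ {a | ∃ r ∈ R, ∃ h : Assign P C, Trigger r h I ∧ a ∈ r.skApply h}

def skIter {P C : Type} (R : Set (Rule P C)) (I : Inst P C) : ℕ → Inst P C
  | 0 => I
  | n + 1 => skStep R (skIter R I n)

/-- The skolem chase `chase_sk(I,R)`. -/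
def skChase {P C : Type} (R : Set (Rule P C)) (I : Inst P C) : Inst P C :=
  ⋃ n, skIter R I n

/-- `R` is all-instance terminating under the skolem chase. -/
def SkTerminating {P C : Type} (R : Set (Rule P C)) : Prop :=
  ∀ I : Inst P C, IsDatabase I → (skChase R I).Finite

/-- An infinite (fair) restricted chase sequence of `R` from `I0`. -/
def InfiniteRCS {P C : Type} (R : Set (Rule P C)) (I0 : Inst P C)
    (Is : ℕ → Inst P C) (rs : ℕ → Rule P C) (hs : ℕ → Assign P C) : Prop :=
  Is 0 = I0 ∧
  (∀ i, rs i ∈ R ∧ ActiveTrigger (rs i) (hs i) (Is i) ∧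
      Is (i + 1) = Is i ∪ (rs i).skApply (hs i)) ∧
  (∀ i j, i ≠ j → ¬ (rs i = rs j ∧ hs i = hs j)) ∧
  (∀ i, ∀ r ∈ R, ∀ h : Assign P C, ActiveTrigger r h (Is i) →
      ∃ j, i ≤ j ∧ ((rs j = r ∧ hs j = h) ∨ ¬ ActiveTrigger r h (Is j)))

/-- `R` is all-instance terminating under the restricted chase. -/
def ResTerminating {P C : Type} (R : Set (Rule P C)) : Prop :=
  ¬ ∃ (I0 : Inst P C) (Is : ℕ → Inst P C) (rs : ℕ → Rule P C) (hs : ℕ → Assign P C),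
      IsDatabase I0 ∧ InfiniteRCS R I0 Is rs hs

/-! ## Heights, sizes, bounded rule sets, MembCheck -/

/-- Every term occurring in the instance `I` has height at most `n`. -/
def instHeightLe {P C : Type} (I : Inst P C) (n : ℕ) : Prop :=
  ∀ a ∈ I, ∀ t ∈ a.args, GTerm.height t ≤ n

/-- The size of a rule: the sum of the sizes of its atoms. -/
def Rule.size {P C : Type} (r : Rule P C) : ℕ :=
  (∑ a ∈ r.body, a.args.length) + ∑ a ∈ r.head, a.args.length

/-- `‖R‖`: the number of symbols occurring in the rule set `R`. -/
def ruleSetSize {P C : Type} (R : Finset (Rule P C)) : ℕ :=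
  ∑ r ∈ R, r.size

/-- `R` is `δ`-bounded under the restricted chase (with `bound = δ(‖R‖)`):
every restricted chase sequence of `R` and any database has height at most `bound`. -/
def DeltaBoundedRes {P C : Type} (R : Set (Rule P C)) (bound : ℕ) : Prop :=
  ∀ I0 : Inst P C, IsDatabase I0 → ∀ π : List (Rule P C), (∀ r ∈ π, r ∈ R) →
    ∀ (Is : ℕ → Inst P C) (hs : ℕ → Assign P C), RCSeq π I0 Is hs →
      ∀ i ≤ π.length, instHeightLe (Is i) bound

/-- The skolem critical database `I^R`: all atoms `P(t)` where `P` occurs in `R`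
(with an arity it has in `R`) and `t` ranges over tuples of constants occurring in
`R` together with the fresh constant `∗ = inr (0,0)`. -/
def skCritDB {P C : Type} (R : Set (Rule P C)) : Inst P C :=
  {a | (∃ r ∈ R, ∃ b : Atom P (RArg C), (b ∈ r.body ∨ b ∈ r.head) ∧
          b.pred = a.pred ∧ b.args.length = a.args.length) ∧
       ∀ t ∈ a.args,
         (∃ c : C, (∃ r ∈ R, ∃ b : Atom P (RArg C), (b ∈ r.body ∨ b ∈ r.head) ∧
             RArg.const c ∈ b.args) ∧ t = GTerm.const (Sum.inl c)) ∨
         t = GTerm.const (Sum.inr (0, 0))}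

/-- The condition under which the procedure `MembCheck(R,δ)` returns `T`. -/
def MembCheckT {P C : Type} (R : Finset (Rule P C)) (δ : ℕ → ℕ) : Prop :=
  instHeightLe (skChase (↑R : Set (Rule P C)) (skCritDB (↑R : Set (Rule P C))))
      (δ (ruleSetSize R)) ∨
  (∀ π : List (Rule P C), π ≠ [] → (∀ r ∈ π, r ∈ R) →
    (∃ (Is : ℕ → Inst P C) (hs : ℕ → Assign P C),
        SkSeq π (skCritDB (↑R : Set (Rule P C))) Is hs ∧
        ∃ i ≤ π.length, ∃ a ∈ Is i, ∃ t ∈ a.args,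
          GTerm.height t = δ (ruleSetSize R) + 1) →
    ∀ rn : ℕ × ℕ → ℕ × ℕ, IsRenaming rn →
      ¬ ActivePath π (renameInst rn (criticalDB π)))

/-! By pigeonhole, some element occurs more than `k` times in a long enough prefix of `s`.
In the shortest such prefix every element occurs at most `k + 1` times, and the element `x`
occurring `k + 1` times is its last entry; cutting the prefix just before the first occurrence
of `x` leaves a `k`-cycle. -/

theorem occCount_eq_count {α : Type} [DecidableEq α] (σ : List α) (x : α) :
    occCount σ x = σ.count x := by
  rw [occCount, ← Finset.coe_filter_univ, Set.ncard_coe_finset]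
  exact Fin.card_filter_univ_eq_vector_get_eq_count x ⟨σ, rfl⟩

namespace List

theorem exists_lt_count_of_card_mul_lt_length {α : Type} [Fintype α] [DecidableEq α] {k : ℕ}
    (l : List α) (h : Fintype.card α * k < l.length) : ∃ x, k < l.count x := by
  by_contra! hle
  have : l.length ≤ Fintype.card α * k := calc
    l.length = ∑ x, l.count x := by
      simpa using (Multiset.sum_count_eq_card (s := Finset.univ) (m := (l : Multiset α))
        (by simp)).symm
    _ ≤ ∑ _x : α, k := Finset.sum_le_sum fun x _ => hle x
    _ = Fintype.card α * k := by simp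
  omega

theorem IsInfix.exists_eq_map_range_add {α : Type} {s : ℕ → α} {t : List α} {N : ℕ}
    (ht : t <:+: (range N).map s) : ∃ n, t = (range t.length).map fun i => s (n + i) := by
  obtain ⟨u, v, huv⟩ := ht
  have hlen := congrArg length huv
  simp only [length_append, length_map, length_range] at hlen
  refine ⟨u.length, ext_getElem (by simp) fun i hi _ => ?_⟩
  have hentry := congrArg (·[u.length + i]?) huv
  simp [getElem?_append_right, getElem?_append_left, hi,
    getElem?_range (by omega : u.length + i < N)] at hentry
  simpa using hentry

end List

theorem isKCycle_dropWhile_ne {α : Type} [DecidableEq α] {k : ℕ} {l : List α} {x : α}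
    (hx : (l ++ [x]).count x = k + 1) (hle : ∀ y, (l ++ [x]).count y ≤ k + 1) :
    IsKCycle k ((l ++ [x]).dropWhile (· ≠ x)) := by
  set t := (l ++ [x]).dropWhile (· ≠ x)
  have hx_notMem : x ∉ (l ++ [x]).takeWhile (· ≠ x) := fun h => by
    simpa using List.mem_takeWhile_imp h
  have htx : t.count x = k + 1 := by
    rw [← hx, ← List.takeWhile_append_dropWhile (p := (· ≠ x)) (l := l ++ [x]), List.count_append,
      List.count_eq_zero.2 hx_notMem, zero_add]
  have hne : t ≠ [] := by rintro h; simp [h] at htx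
  refine ⟨hne, ?_, ⟨x, List.count_pos_iff.1 (by omega), by rwa [occCount_eq_count]⟩,
    fun y _ => (occCount_eq_count t y).trans_le
      (((List.dropWhile_suffix _).count_le y).trans (hle y))⟩
  have hhead := List.head_dropWhile_not (· ≠ x) hne
  rw [List.head?_eq_some_head hne, List.getLast?_eq_some_getLast hne,
    (List.dropWhile_suffix _).getLast hne, List.getLast_append_singleton]
  simpa [t] using hhead

theorem exists_isKCycle_infix_of_lt_count {α : Type} [DecidableEq α] {k : ℕ} {l : List α}
    {x : α} (hx : k < l.count x) : ∃ t, t <:+: l ∧ IsKCycle k t := by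
  induction l using List.reverseRecOn generalizing x with
  | nil => simp at hx
  | append_singleton l a ih =>
    by_cases hl : ∃ z, k < l.count z
    · obtain ⟨z, hz⟩ := hl
      obtain ⟨t, ht, hcyc⟩ := ih hz
      exact ⟨t, ht.trans (List.infix_append [] l [a]), hcyc⟩
    push Not at hl
    have hxa : x = a := by
      by_contra hne
      rw [List.count_append, (List.count_eq_zero (l := [a])).2 (by simpa using hne)] at hx
      exact absurd (hl x) (by omega)
    subst hxa
    refine ⟨_, (List.dropWhile_suffix _).isInfix, isKCycle_dropWhile_ne ?_ fun y => ?_⟩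
    · have := hl x
      simp only [List.count_append, List.count_singleton_self] at hx ⊢
      omega
    · have := hl y
      have : [x].count y ≤ 1 := List.count_le_length
      rw [List.count_append]
      omega

theorem exists_kCycle_segment_of_infinite_sequence_general
    {S : Type} [Finite S] (s : ℕ → S) (k : ℕ) :
    ∃ n m : ℕ, IsKCycle k ((List.range m).map fun i => s (n + i)) := by
  classical
  have := Fintype.ofFinite S
  obtain ⟨x, hx⟩ := List.exists_lt_count_of_card_mul_lt_length (k := k)
    ((List.range (Fintype.card S * k + 1)).map s) (by simp)
  obtain ⟨t, ht, hcyc⟩ := exists_isKCycle_infix_of_lt_count hx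
  obtain ⟨n, hn⟩ := ht.exists_eq_map_range_add
  exact ⟨n, t.length, hn ▸ hcyc⟩

/-- Every infinite sequence over a finite nonempty set contains, for
every `k ≥ 1`, a contiguous finite subsequence that is a `k`-cycle. -/
theorem exists_kCycle_segment_of_infinite_sequence
    {S : Type} [Finite S] [Nonempty S] (s : ℕ → S) (k : ℕ) (hk : 1 ≤ k) :
    ∃ n m : ℕ, IsKCycle k ((List.range m).map fun i => s (n + i)) :=
  exists_kCycle_segment_of_infinite_sequence_general s k
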